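/- arXiv:2603.16644 — 2 statements merged into one kernel-verified Lean document; each statement's English description precedes it below -/
import Mathlib

section
/- Let A ∈ ℝ^{m×n} have rank n, R_s ∈ ℝ^{n×n} be invertible, E ∈ ℝ^{n×n} with ‖E‖·‖R_s⁻¹‖ < 1, and set ε = ‖E‖/‖R_s‖, A_p = A R_s⁻¹, A_1 = A (R_s + E)⁻¹. Then κ(A_1) ≤ κ(A_p) · (1 + ε·κ(R_s)) / (1 − ε·κ(R_s)), where for a full column rank matrix M, κ(M) = ‖M‖·‖M†‖ with M† the Moore–Penrose inverse. -/
open Matrix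

/-- Spectral (operator 2-) norm of a real matrix. -/
noncomputable def spNorm {m n : ℕ} (M : Matrix (Fin m) (Fin n) ℝ) : ℝ :=
  ‖LinearMap.toContinuousLinearMap (Matrix.toEuclideanLin M)‖

/-- Euclidean 2-norm of a real vector. -/
noncomputable def vNorm {n : ℕ} (x : Fin n → ℝ) : ℝ :=
  ‖(WithLp.equiv 2 (Fin n → ℝ)).symm x‖

/-- Moore–Penrose left inverse of a full column rank matrix. -/
noncomputable def pinv {m n : ℕ} (A : Matrix (Fin m) (Fin n) ℝ) : Matrix (Fin n) (Fin m) ℝ :=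
  (Aᵀ * A)⁻¹ * Aᵀ

/-- Condition number with respect to left inversion. -/
noncomputable def kappa {m n : ℕ} (A : Matrix (Fin m) (Fin n) ℝ) : ℝ :=
  spNorm A * spNorm (pinv A)

/-!
Write `Rs + E = (1 + X) Rs` with `X = E Rs⁻¹`, so that `A (Rs + E)⁻¹ = A_p (1 + X)⁻¹` and,
since `pinv (B M) = M⁻¹ pinv B` for invertible `M`, `κ(A_1) ≤ κ(A_p) κ(1 + X)`.
The Neumann-series estimate `‖(1 + X)⁻¹‖ ≤ 1 / (1 - ‖X‖)` gives
`κ(1 + X) ≤ (1 + ‖X‖) / (1 - ‖X‖)`, and `‖X‖ ≤ ‖E‖ ‖Rs⁻¹‖ = ε κ(Rs)`.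
-/

open scoped Matrix.Norms.L2Operator

lemma norm_mul_one_sub_norm_le_of_one_add_mul_eq_one {R : Type*} [NormedRing R] {X B : R}
    (hB : (1 + X) * B = 1) : ‖B‖ * (1 - ‖X‖) ≤ ‖(1 : R)‖ := by
  have hB' : B = 1 - X * B := eq_sub_of_add_eq (by rwa [add_mul, one_mul] at hB)
  have : ‖B‖ ≤ ‖(1 : R)‖ + ‖X‖ * ‖B‖ :=
    calc ‖B‖ = ‖1 - X * B‖ := congrArg _ hB'
      _ ≤ ‖(1 : R)‖ + ‖X * B‖ := norm_sub_le _ _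
      _ ≤ ‖(1 : R)‖ + ‖X‖ * ‖B‖ := by gcongr; exact norm_mul_le _ _
  linarith

lemma Matrix.l2_opNorm_one_le {ι 𝕜 : Type*} [RCLike 𝕜] [Fintype ι] [DecidableEq ι] :
    ‖(1 : Matrix ι ι 𝕜)‖ ≤ 1 := by
  rw [Matrix.cstar_norm_def, map_one]
  exact ContinuousLinearMap.norm_id_le

section SpectralNorm

variable {m n l : ℕ}

lemma spNorm_eq_norm (M : Matrix (Fin m) (Fin n) ℝ) : spNorm M = ‖M‖ :=
  (Matrix.l2_opNorm_def M).symm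

lemma spNorm_nonneg (M : Matrix (Fin m) (Fin n) ℝ) : 0 ≤ spNorm M :=
  (spNorm_eq_norm M).symm ▸ norm_nonneg M

lemma spNorm_mul_le (A : Matrix (Fin m) (Fin n) ℝ) (B : Matrix (Fin n) (Fin l) ℝ) :
    spNorm (A * B) ≤ spNorm A * spNorm B := by
  simp only [spNorm_eq_norm]
  exact Matrix.l2_opNorm_mul A B

lemma kappa_nonneg (M : Matrix (Fin m) (Fin n) ℝ) : 0 ≤ kappa M :=
  mul_nonneg (spNorm_nonneg _) (spNorm_nonneg _)

lemma pinv_mul_of_isUnit_det (A : Matrix (Fin m) (Fin n) ℝ) {M : Matrix (Fin n) (Fin n) ℝ}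
    (hM : IsUnit M.det) : pinv (A * M) = M⁻¹ * pinv A := by
  have hMT : IsUnit Mᵀ.det := Matrix.isUnit_det_transpose M hM
  have hgram : (A * M)ᵀ * (A * M) = Mᵀ * (Aᵀ * A) * M := by
    simp only [Matrix.transpose_mul, Matrix.mul_assoc]
  rw [pinv, hgram, Matrix.transpose_mul, Matrix.mul_inv_rev, Matrix.mul_inv_rev, pinv]
  simp only [Matrix.mul_assoc]
  rw [Matrix.nonsing_inv_mul_cancel_left _ _ hMT]

lemma pinv_of_isUnit_det {M : Matrix (Fin n) (Fin n) ℝ} (hM : IsUnit M.det) : pinv M = M⁻¹ := by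
  simpa [pinv] using pinv_mul_of_isUnit_det (1 : Matrix (Fin n) (Fin n) ℝ) hM

lemma kappa_mul_le (B : Matrix (Fin m) (Fin n) ℝ) {M : Matrix (Fin n) (Fin n) ℝ}
    (hM : IsUnit M.det) : kappa (B * M) ≤ kappa B * kappa M := by
  rw [kappa, kappa, kappa, pinv_mul_of_isUnit_det B hM, pinv_of_isUnit_det hM]
  calc spNorm (B * M) * spNorm (M⁻¹ * pinv B)
      ≤ (spNorm B * spNorm M) * (spNorm M⁻¹ * spNorm (pinv B)) := by
        exact mul_le_mul (spNorm_mul_le _ _) (spNorm_mul_le _ _) (spNorm_nonneg _)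
          (mul_nonneg (spNorm_nonneg _) (spNorm_nonneg _))
    _ = spNorm B * spNorm (pinv B) * (spNorm M * spNorm M⁻¹) := by ring

lemma kappa_nonsing_inv {M : Matrix (Fin n) (Fin n) ℝ} (hM : IsUnit M.det) :
    kappa M⁻¹ = kappa M := by
  rw [kappa, kappa, pinv_of_isUnit_det (Matrix.isUnit_nonsing_inv_det M hM),
    pinv_of_isUnit_det hM, Matrix.nonsing_inv_nonsing_inv M hM, mul_comm]

lemma isUnit_det_one_add_of_spNorm_lt_one {X : Matrix (Fin n) (Fin n) ℝ} (hX : spNorm X < 1) :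
    IsUnit (1 + X).det := by
  rw [← Matrix.isUnit_iff_isUnit_det, ← sub_neg_eq_add]
  exact (Units.oneSub (-X) (by rwa [norm_neg, ← spNorm_eq_norm])).isUnit

lemma kappa_one_add_le {X : Matrix (Fin n) (Fin n) ℝ} (hX : spNorm X < 1) :
    kappa (1 + X) ≤ (1 + spNorm X) / (1 - spNorm X) := by
  have hU := isUnit_det_one_add_of_spNorm_lt_one hX
  rw [kappa, pinv_of_isUnit_det hU]
  simp only [spNorm_eq_norm] at hX ⊢
  have hinv : ‖(1 + X)⁻¹‖ * (1 - ‖X‖) ≤ 1 :=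
    (norm_mul_one_sub_norm_le_of_one_add_mul_eq_one (Matrix.mul_nonsing_inv _ hU)).trans
      Matrix.l2_opNorm_one_le
  have hsum : ‖1 + X‖ ≤ 1 + ‖X‖ :=
    (norm_add_le _ _).trans (add_le_add_left Matrix.l2_opNorm_one_le _)
  rw [le_div_iff₀ (by linarith)]
  calc ‖1 + X‖ * ‖(1 + X)⁻¹‖ * (1 - ‖X‖) = ‖1 + X‖ * (‖(1 + X)⁻¹‖ * (1 - ‖X‖)) := by ring
    _ ≤ (1 + ‖X‖) * 1 := by gcongr
    _ = 1 + ‖X‖ := mul_one _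

lemma div_spNorm_mul_kappa (a : ℝ) (M : Matrix (Fin m) (Fin n) ℝ) :
    a / spNorm M * kappa M = a * spNorm (pinv M) := by
  by_cases hM : spNorm M = 0
  · have hpinv : pinv M = 0 := by
      simp [pinv, norm_eq_zero.mp ((spNorm_eq_norm M).symm.trans hM)]
    rw [kappa, hpinv, hM, div_zero, zero_mul, spNorm_eq_norm, norm_zero, mul_zero]
  · rw [kappa]
    field_simp

end SpectralNorm

theorem stmt_2_general {m n : ℕ} (A : Matrix (Fin m) (Fin n) ℝ) (Rs E : Matrix (Fin n) (Fin n) ℝ)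
    (hR : IsUnit Rs.det) (h : spNorm E * spNorm Rs⁻¹ < 1)
    (ε : ℝ) (hε : ε = spNorm E / spNorm Rs) :
    kappa (A * (Rs + E)⁻¹) ≤
      kappa (A * Rs⁻¹) * ((1 + ε * kappa Rs) / (1 - ε * kappa Rs)) := by
  set X := E * Rs⁻¹
  have hXt : spNorm X ≤ spNorm E * spNorm Rs⁻¹ := spNorm_mul_le E Rs⁻¹
  have hU := isUnit_det_one_add_of_spNorm_lt_one (hXt.trans_lt h)
  have hfactor : A * (Rs + E)⁻¹ = A * Rs⁻¹ * (1 + X)⁻¹ := by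
    rw [show Rs + E = (1 + X) * Rs by
        rw [add_mul, one_mul, Matrix.nonsing_inv_mul_cancel_right _ _ hR],
      Matrix.mul_inv_rev, Matrix.mul_assoc]
  have hεκ : ε * kappa Rs = spNorm E * spNorm Rs⁻¹ := by
    rw [hε, div_spNorm_mul_kappa, pinv_of_isUnit_det hR]
  rw [hεκ, hfactor]
  calc kappa (A * Rs⁻¹ * (1 + X)⁻¹) ≤ kappa (A * Rs⁻¹) * kappa (1 + X) := by
        rw [← kappa_nonsing_inv hU]
        exact kappa_mul_le _ (Matrix.isUnit_nonsing_inv_det _ hU)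
    _ ≤ kappa (A * Rs⁻¹) * ((1 + spNorm X) / (1 - spNorm X)) := by
        gcongr
        · exact kappa_nonneg _
        · exact kappa_one_add_le (hXt.trans_lt h)
    _ ≤ kappa (A * Rs⁻¹) * ((1 + spNorm E * spNorm Rs⁻¹) / (1 - spNorm E * spNorm Rs⁻¹)) := by
        have := spNorm_nonneg X
        gcongr
        · exact kappa_nonneg _
        · linarith

theorem stmt_2 {m n : ℕ} (A : Matrix (Fin m) (Fin n) ℝ) (Rs E : Matrix (Fin n) (Fin n) ℝ)
    (hA : A.rank = n) (hR : IsUnit Rs.det) (h : spNorm E * spNorm Rs⁻¹ < 1)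
    (ε : ℝ) (hε : ε = spNorm E / spNorm Rs) :
    kappa (A * (Rs + E)⁻¹) ≤
      kappa (A * Rs⁻¹) * ((1 + ε * kappa Rs) / (1 - ε * kappa Rs)) :=
  stmt_2_general A Rs E hR h ε hε
end

section
/- Let A ∈ ℝ^{m×n} have rank n, R_s invertible, A_p = A R_s⁻¹, E_A a perturbation, A_1 = (A+E_A)(R_s+E_s)⁻¹ with ‖E_s‖·‖R_s⁻¹‖ < 1. If x̂ satisfies A_1ᵀ A_1 ŷ = A_1ᵀ b and (R_s+E_s) x̂ = ŷ, and r = A x̂ − b, then A_pᵀ (I + E_A A†)ᵀ r = − A_pᵀ (I + E_A A†)ᵀ E_A x̂. -/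
/-!
Since `A† A = 1`, the matrix `(I + E_A A†) A_p` equals `(A + E_A) R_s⁻¹`, so the claim says
`R_s⁻ᵀ (A + E_A)ᵀ ((A + E_A) x̂ - b) = 0`. The perturbation bound makes `R_s + E_s` invertible,
hence `A₁ ŷ = (A + E_A) x̂`, and the normal equations for `A₁` become, after cancelling the
invertible factor `(R_s + E_s)⁻ᵀ`, the normal equations `(A + E_A)ᵀ ((A + E_A) x̂ - b) = 0`.
-/

open Matrix

theorem Units.isUnit_add_of_norm_mul_lt_one {R : Type*} [NormedRing R] [HasSummableGeomSeries R]
    (u : Rˣ) {t : R} (h : ‖t‖ * ‖(↑u⁻¹ : R)‖ < 1) : IsUnit (↑u + t) := by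
  have hsmall : ‖-(↑u⁻¹ * t)‖ < 1 := by
    rw [norm_neg]
    exact (norm_mul_le _ _).trans_lt (by rwa [mul_comm])
  have hfactor : (↑u + t : R) = u * (1 - -(↑u⁻¹ * t)) := by
    rw [sub_neg_eq_add, mul_add, mul_one, Units.mul_inv_cancel_left]
  rw [hfactor]
  exact u.isUnit.mul (isUnit_one_sub_of_norm_lt_one hsmall)

open scoped Matrix.Norms.L2Operator in
theorem isUnit_det_add_of_spNorm_mul_lt_one {n : ℕ} {R E : Matrix (Fin n) (Fin n) ℝ}
    (hR : IsUnit R.det) (h : spNorm E * spNorm R⁻¹ < 1) : IsUnit (R + E).det := by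
  rw [← isUnit_iff_isUnit_det]
  exact Units.isUnit_add_of_norm_mul_lt_one (nonsingInvUnit R hR) h

theorem Matrix.isUnit_of_rank_eq_card {K n : Type*} [Field K] [Fintype n] [DecidableEq n]
    {M : Matrix n n K} (h : M.rank = Fintype.card n) : IsUnit M := by
  have hsurj : Function.Surjective M.mulVecLin :=
    LinearMap.range_eq_top.mp (Submodule.eq_top_of_finrank_eq (by simpa [Matrix.rank] using h))
  exact mulVec_surjective_iff_isUnit.mp hsurj

theorem pinv_mul_self {m n : ℕ} {A : Matrix (Fin m) (Fin n) ℝ} (hA : A.rank = n) :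
    pinv A * A = 1 := by
  have hAtA : IsUnit (Aᵀ * A) :=
    isUnit_of_rank_eq_card (by rw [rank_transpose_mul_self, hA, Fintype.card_fin])
  rw [pinv, Matrix.mul_assoc, nonsing_inv_mul _ ((isUnit_iff_isUnit_det _).mp hAtA)]

theorem Matrix.one_add_mul_mul_eq_add_of_mul_eq_one {R m n : Type*} [Semiring R] [Fintype m]
    [Fintype n] [DecidableEq m] [DecidableEq n] {A E : Matrix m n R} {P : Matrix n m R}
    (hPA : P * A = 1) : (1 + E * P) * A = A + E := by
  rw [Matrix.add_mul, Matrix.one_mul, Matrix.mul_assoc, hPA, Matrix.mul_one]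

theorem Matrix.transpose_mulVec_sub_eq_zero_of_normal_eq_mul_inv {R m n : Type*} [CommRing R]
    [Fintype m] [Fintype n] [DecidableEq n] {B : Matrix m n R} {S : Matrix n n R}
    (hS : IsUnit S.det) {b : m → R} {x : n → R}
    (h : ((B * S⁻¹)ᵀ * (B * S⁻¹)) *ᵥ (S *ᵥ x) = (B * S⁻¹)ᵀ *ᵥ b) :
    Bᵀ *ᵥ (B *ᵥ x - b) = 0 := by
  have hsol : (B * S⁻¹) *ᵥ (S *ᵥ x) = B *ᵥ x := by
    rw [mulVec_mulVec, Matrix.mul_assoc, nonsing_inv_mul _ hS, Matrix.mul_one]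
  have hscaled : S⁻¹ᵀ *ᵥ (Bᵀ *ᵥ (B *ᵥ x - b)) = 0 := by
    rw [mulVec_mulVec, ← transpose_mul, mulVec_sub, ← hsol, mulVec_mulVec, h, sub_self]
  calc Bᵀ *ᵥ (B *ᵥ x - b) = (Sᵀ * S⁻¹ᵀ) *ᵥ (Bᵀ *ᵥ (B *ᵥ x - b)) := by
        rw [← transpose_mul, nonsing_inv_mul _ hS, transpose_one, one_mulVec]
    _ = 0 := by rw [← mulVec_mulVec, hscaled, mulVec_zero]

theorem stmt_17 {m n : ℕ} (A EA : Matrix (Fin m) (Fin n) ℝ) (Rs Es : Matrix (Fin n) (Fin n) ℝ)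
    (hA : A.rank = n) (hR : IsUnit Rs.det) (hEs : spNorm Es * spNorm Rs⁻¹ < 1)
    (Ap : Matrix (Fin m) (Fin n) ℝ) (hAp : Ap = A * Rs⁻¹)
    (A₁ : Matrix (Fin m) (Fin n) ℝ) (hA₁ : A₁ = (A + EA) * (Rs + Es)⁻¹)
    (b : Fin m → ℝ) (xh yh : Fin n → ℝ)
    (hy : (A₁ᵀ * A₁) *ᵥ yh = A₁ᵀ *ᵥ b)
    (hx : (Rs + Es) *ᵥ xh = yh)
    (r : Fin m → ℝ) (hr : r = A *ᵥ xh - b) :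
    (Apᵀ * (1 + EA * pinv A)ᵀ) *ᵥ r =
      -((Apᵀ * (1 + EA * pinv A)ᵀ) *ᵥ (EA *ᵥ xh)) := by
  subst hAp hA₁ hx hr
  have hnormal : (A + EA)ᵀ *ᵥ ((A + EA) *ᵥ xh - b) = 0 :=
    transpose_mulVec_sub_eq_zero_of_normal_eq_mul_inv
      (isUnit_det_add_of_spNorm_mul_lt_one hR hEs) hy
  have hM : (A * Rs⁻¹)ᵀ * (1 + EA * pinv A)ᵀ = ((A + EA) * Rs⁻¹)ᵀ := by
    rw [← transpose_mul, ← Matrix.mul_assoc,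
      one_add_mul_mul_eq_add_of_mul_eq_one (pinv_mul_self hA)]
  have hresidual : A *ᵥ xh - b + EA *ᵥ xh = (A + EA) *ᵥ xh - b := by
    rw [add_mulVec]
    abel
  rw [hM, eq_neg_iff_add_eq_zero, ← mulVec_add, hresidual, transpose_mul, ← mulVec_mulVec,
    hnormal, mulVec_zero]
end
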